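/- The frequency (density) of the letter 0 in p equals 1/β₁², i.e., the number of 0's in the prefix of length N of p, divided by N, tends to 1/β₁² as N → ∞, where β₁ is the real root of X³ - 2X² + X - 1. -/

import Mathlib

/-- The morphism h : 0 → 01, 1 → 21, 2 → 0. -/
def h : ℕ → List ℕ
  | 0 => [0, 1]
  | 1 => [2, 1]
  | _ => [0]

/-- Apply the morphism h to a finite word. -/
def hword (w : List ℕ) : List ℕ := (w.map h).flatten

/-- `p : ℕ → ℕ` is the infinite fixed point of h starting with 0:
it takes values in {0,1,2}, starts with 0, and for every n the word
h(p 0) h(p 1) ⋯ h(p (n-1)) is a prefix of p. -/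
def IsFixedPoint (p : ℕ → ℕ) : Prop :=
  (∀ n, p n < 3) ∧ p 0 = 0 ∧
  ∀ n k, k < (hword ((List.range n).map p)).length →
    (hword ((List.range n).map p)).getD k 0 = p k

/-- `w` is a (contiguous) factor of the infinite word `p`. -/
def IsFactor (w : List ℕ) (p : ℕ → ℕ) : Prop :=
  ∃ i : ℕ, w = (List.range w.length).map fun j => p (i + j)

/-!
Write `D N` and `E N` for the deviations of the numbers of 1's and 2's in the prefix of length `N`
from their expected values `(1 - 1/β) N` and `(2 - β) N`. Since `p` is a fixed point, the prefix of
length `L n = |h(p₀ ⋯ pₙ₋₁)|` is the image of the prefix of length `n`, and counting letters gives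
`D (L n) = -E n / β`, `E (L n) = D n + (2 - β) E n`. This matrix has characteristic polynomial
`X² - (2 - β) X + 1/β`, whose roots are the conjugates of `β` and have modulus `β^(-1/2) < 1`;
concretely it contracts the norm `max (|D|, 2|E|/3)`. Every `N ≥ 1` is `L n` or `L n + 1` with
`n < N`, and one step changes `D, E` by at most 1, so by induction `|D| ≤ 8` and `|E| ≤ 12`
everywhere. The count of 0's then deviates from `N (1 - (1 - 1/β) - (2 - β)) = N / β²` by at most 20.
-/

open Filter Topology

lemma hword_cons (a : ℕ) (w : List ℕ) : hword (a :: w) = h a ++ hword w := by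
  simp [hword]

lemma count_two_hword (w : List ℕ) : (hword w).count 2 = w.count 1 := by
  induction w with
  | nil => rfl
  | cons a w ih =>
    rcases a with _ | _ | a <;> simp [hword_cons, h, ih]

lemma count_one_hword (w : List ℕ) : (hword w).count 1 = w.count 0 + w.count 1 := by
  induction w with
  | nil => rfl
  | cons a w ih =>
    rcases a with _ | _ | a <;> simp [hword_cons, h, ih] <;> omega

lemma length_hword (w : List ℕ) : (hword w).length = w.length + w.count 0 + w.count 1 := by
  induction w with
  | nil => rfl
  | cons a w ih =>
    rcases a with _ | _ | a <;> simp [hword_cons, h, ih] <;> omega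

lemma count_zero_add_count_one_add_count_two {w : List ℕ} (hw : ∀ a ∈ w, a < 3) :
    w.count 0 + w.count 1 + w.count 2 = w.length := by
  induction w with
  | nil => rfl
  | cons a w ih =>
    have ha : a < 3 := hw a List.mem_cons_self
    have := ih fun b hb => hw b (List.mem_cons_of_mem a hb)
    interval_cases a <;> simp <;> omega

lemma exists_lt_and_eq_or_eq_add_one {L : ℕ → ℕ} (h0 : L 0 = 0)
    (hstep : ∀ n, L n + 1 ≤ L (n + 1) ∧ L (n + 1) ≤ L n + 2) {N : ℕ} (hN : 1 ≤ N) :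
    ∃ n < N, N = L n ∨ N = L n + 1 := by
  induction N, hN using Nat.le_induction with
  | base => exact ⟨0, one_pos, Or.inr (by rw [h0])⟩
  | succ N _ ih =>
    obtain ⟨n, hnN, rfl | rfl⟩ := ih
    · exact ⟨n, by omega, Or.inr rfl⟩
    · obtain ⟨hlo, hhi⟩ := hstep n
      rcases (by omega : L (n + 1) = L n + 1 ∨ L (n + 1) = L n + 2) with hL | hL
      · exact ⟨n + 1, by omega, Or.inr (by omega)⟩
      · exact ⟨n + 1, by omega, Or.inl (by omega)⟩

lemma abs_le_of_contracting_along {L : ℕ → ℕ} {D E : ℕ → ℝ} {a b : ℝ}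
    (ha : |a| ≤ 7 / 12) (hb : |b| ≤ 1 / 4) (hD0 : D 0 = 0) (hE0 : E 0 = 0)
    (hD : ∀ N, |D (N + 1) - D N| ≤ 1) (hE : ∀ N, |E (N + 1) - E N| ≤ 1)
    (hcover : ∀ N, 1 ≤ N → ∃ n < N, N = L n ∨ N = L n + 1)
    (hDL : ∀ n, D (L n) = a * E n) (hEL : ∀ n, E (L n) = D n + b * E n) (N : ℕ) :
    |D N| ≤ 8 ∧ |E N| ≤ 12 := by
  induction N using Nat.strong_induction_on with
  | _ N ih =>
    rcases Nat.eq_zero_or_pos N with rfl | hN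
    · simp [hD0, hE0]
    obtain ⟨n, hnN, hNn⟩ := hcover N hN
    obtain ⟨hDn, hEn⟩ := ih n hnN
    have hDL' : |D (L n)| ≤ 7 := by
      rw [hDL, abs_mul]
      nlinarith [abs_nonneg a, abs_nonneg (E n)]
    have hEL' : |E (L n)| ≤ 11 := by
      rw [hEL]
      calc |D n + b * E n| ≤ |D n| + |b| * |E n| := (abs_add_le _ _).trans_eq (by rw [abs_mul])
        _ ≤ 11 := by nlinarith [abs_nonneg b, abs_nonneg (E n)]
    rcases hNn with rfl | rfl
    · exact ⟨by linarith, by linarith⟩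
    · constructor
      · linarith [abs_sub_abs_le_abs_sub (D (L n + 1)) (D (L n)), hD (L n)]
      · linarith [abs_sub_abs_le_abs_sub (E (L n + 1)) (E (L n)), hE (L n)]

lemma tendsto_div_natCast_of_abs_sub_le {c : ℕ → ℝ} {u C : ℝ} (hc : ∀ N, |c N - u * N| ≤ C) :
    Tendsto (fun N : ℕ => c N / N) atTop (𝓝 u) := by
  have hdev : Tendsto (fun N : ℕ => (c N - u * N) / N) atTop (𝓝 0) := by
    refine squeeze_zero_norm' ?_ (tendsto_const_div_atTop_nhds_zero_nat C)
    filter_upwards [eventually_gt_atTop 0] with N hN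
    rw [Real.norm_eq_abs, abs_div, Nat.abs_cast]
    gcongr
    exact hc N
  have hlim := hdev.add_const u
  rw [zero_add] at hlim
  refine hlim.congr' ?_
  filter_upwards [eventually_gt_atTop 0] with N hN
  field_simp
  ring

def prefixCount (p : ℕ → ℕ) (a N : ℕ) : ℕ := ((List.range N).map p).count a

def imageLength (p : ℕ → ℕ) (n : ℕ) : ℕ := (hword ((List.range n).map p)).length

lemma prefixCount_succ (p : ℕ → ℕ) (a N : ℕ) :
    prefixCount p a (N + 1) = prefixCount p a N + if p N = a then 1 else 0 := by
  simp [prefixCount, List.range_succ, List.count_singleton]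

lemma imageLength_succ (p : ℕ → ℕ) (n : ℕ) :
    imageLength p (n + 1) = imageLength p n + (h (p n)).length := by
  simp [imageLength, List.range_succ, hword]

lemma imageLength_succ_le (p : ℕ → ℕ) (n : ℕ) :
    imageLength p n + 1 ≤ imageLength p (n + 1) ∧ imageLength p (n + 1) ≤ imageLength p n + 2 := by
  rw [imageLength_succ]
  rcases p n with _ | _ | a <;> simp [h]

namespace IsFixedPoint

variable {p : ℕ → ℕ} (hp : IsFixedPoint p)
include hp

lemma map_range_imageLength (n : ℕ) :
    (List.range (imageLength p n)).map p = hword ((List.range n).map p) := by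
  apply List.ext_getElem (by simp [imageLength])
  intro i _ hi
  have hpi := hp.2.2 n i hi
  rw [List.getD_eq_getElem _ _ hi] at hpi
  simp [hpi]

lemma prefixCount_add (N : ℕ) :
    prefixCount p 0 N + prefixCount p 1 N + prefixCount p 2 N = N := by
  have := count_zero_add_count_one_add_count_two (w := (List.range N).map p) (by simp [hp.1])
  simpa [prefixCount] using this

lemma imageLength_add_prefixCount_two (n : ℕ) : imageLength p n + prefixCount p 2 n = 2 * n := by
  have := hp.prefixCount_add n
  simp only [imageLength, length_hword, prefixCount, List.length_map, List.length_range] at *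
  omega

lemma prefixCount_one_imageLength_add (n : ℕ) :
    prefixCount p 1 (imageLength p n) + prefixCount p 2 n = n := by
  have := hp.prefixCount_add n
  simp only [prefixCount, hp.map_range_imageLength, count_one_hword] at *
  omega

lemma prefixCount_two_imageLength (n : ℕ) :
    prefixCount p 2 (imageLength p n) = prefixCount p 1 n := by
  simp only [prefixCount, hp.map_range_imageLength, count_two_hword]

end IsFixedPoint

def discrepancy (p : ℕ → ℕ) (a : ℕ) (f : ℝ) (N : ℕ) : ℝ := prefixCount p a N - f * N

lemma abs_discrepancy_succ_sub_le (p : ℕ → ℕ) (a : ℕ) {f : ℝ} (hf₀ : 0 ≤ f) (hf₁ : f ≤ 1)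
    (N : ℕ) : |discrepancy p a f (N + 1) - discrepancy p a f N| ≤ 1 := by
  have hstep : discrepancy p a f (N + 1) - discrepancy p a f N = (if p N = a then 1 else 0) - f := by
    simp only [discrepancy, prefixCount_succ]
    push_cast
    ring
  rw [hstep, abs_le]
  split_ifs <;> constructor <;> linarith

lemma bounds_of_root {β : ℝ} (hβ : β ^ 3 - 2 * β ^ 2 + β - 1 = 0) : 7 / 4 ≤ β ∧ β ≤ 2 := by
  constructor <;> nlinarith [sq_nonneg (β - 1), sq_nonneg (β - 7 / 4), sq_nonneg β]

namespace IsFixedPoint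

variable {p : ℕ → ℕ} (hp : IsFixedPoint p)
include hp

lemma discrepancy_one_imageLength {β : ℝ} (hβ : β ≠ 0) (n : ℕ) :
    discrepancy p 1 (1 - 1 / β) (imageLength p n) = -(1 / β) * discrepancy p 2 (2 - β) n := by
  have hL : (imageLength p n : ℝ) + prefixCount p 2 n = 2 * n := by
    exact_mod_cast hp.imageLength_add_prefixCount_two n
  have h1 : (prefixCount p 1 (imageLength p n) : ℝ) + prefixCount p 2 n = n := by
    exact_mod_cast hp.prefixCount_one_imageLength_add n
  simp only [discrepancy]
  field_simp
  linear_combination β * h1 + (1 - β) * hL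

lemma discrepancy_two_imageLength {β : ℝ} (hβ : β ^ 3 - 2 * β ^ 2 + β - 1 = 0) (n : ℕ) :
    discrepancy p 2 (2 - β) (imageLength p n) =
      discrepancy p 1 (1 - 1 / β) n + (2 - β) * discrepancy p 2 (2 - β) n := by
  have hβ0 : β ≠ 0 := by rintro rfl; norm_num at hβ
  have hL : (imageLength p n : ℝ) + prefixCount p 2 n = 2 * n := by
    exact_mod_cast hp.imageLength_add_prefixCount_two n
  have h2 : (prefixCount p 2 (imageLength p n) : ℝ) = prefixCount p 1 n := by
    exact_mod_cast hp.prefixCount_two_imageLength n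
  simp only [discrepancy]
  field_simp
  linear_combination β * h2 + (β - 2) * β * hL + n * hβ

lemma prefixCount_zero_sub {β : ℝ} (hβ : β ^ 3 - 2 * β ^ 2 + β - 1 = 0) (N : ℕ) :
    (prefixCount p 0 N : ℝ) - 1 / β ^ 2 * N =
      -(discrepancy p 1 (1 - 1 / β) N + discrepancy p 2 (2 - β) N) := by
  have hβ0 : β ≠ 0 := by rintro rfl; norm_num at hβ
  have hN : (prefixCount p 0 N : ℝ) + prefixCount p 1 N + prefixCount p 2 N = N := by
    exact_mod_cast hp.prefixCount_add N
  simp only [discrepancy]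
  field_simp
  linear_combination β ^ 2 * hN + N * hβ

end IsFixedPoint

theorem stmt13_general (p : ℕ → ℕ) (hp : IsFixedPoint p) (β₁ : ℝ)
    (hroot : β₁^3 - 2*β₁^2 + β₁ - 1 = 0) :
    Filter.Tendsto
      (fun N : ℕ => (((List.range N).map p).count 0 : ℝ) / N)
      Filter.atTop (nhds (1 / β₁^2)) := by
  obtain ⟨hβ_lo, hβ_hi⟩ := bounds_of_root hroot
  have hβ0 : β₁ ≠ 0 := by positivity
  have hinv_pos : 0 < 1 / β₁ := by positivity
  have hinv_le : 1 / β₁ ≤ 4 / 7 := by rw [div_le_iff₀ (by positivity)]; linarith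
  have hbounded := abs_le_of_contracting_along (L := imageLength p)
    (D := discrepancy p 1 (1 - 1 / β₁)) (E := discrepancy p 2 (2 - β₁))
    (by rw [abs_le]; constructor <;> linarith) (by rw [abs_le]; constructor <;> linarith)
    (by simp [discrepancy, prefixCount]) (by simp [discrepancy, prefixCount])
    (abs_discrepancy_succ_sub_le p 1 (by linarith) (by linarith))
    (abs_discrepancy_succ_sub_le p 2 (by linarith) (by linarith))
    (fun N hN => exists_lt_and_eq_or_eq_add_one (by rfl) (imageLength_succ_le p) hN)
    (hp.discrepancy_one_imageLength hβ0) (hp.discrepancy_two_imageLength hroot)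
  refine tendsto_div_natCast_of_abs_sub_le (C := 20) fun N => ?_
  have := hbounded N
  rw [show ((((List.range N).map p).count 0 : ℕ) : ℝ) = prefixCount p 0 N from rfl,
    hp.prefixCount_zero_sub hroot, abs_neg]
  exact (abs_add_le _ _).trans (by linarith)

theorem stmt13 (p : ℕ → ℕ) (hp : IsFixedPoint p) (β₁ : ℝ)
    (hroot : β₁^3 - 2*β₁^2 + β₁ - 1 = 0)
    (huniq : ∀ x : ℝ, x^3 - 2*x^2 + x - 1 = 0 → x = β₁) :
    Filter.Tendsto
      (fun N : ℕ => (((List.range N).map p).count 0 : ℝ) / N)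
      Filter.atTop (nhds (1 / β₁^2)) :=
  stmt13_general p hp β₁ hroot
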